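/- arXiv:1906.07705 — 2 statements merged into one kernel-verified Lean document; each statement's English description precedes it below -/
import Mathlib

section
/- Let M be an n×n complex matrix with distinct indices a and b, and let λ be a scalar that is not an eigenvalue of M\a and not an eigenvalue of M\b, and not an eigenvalue of M\{a,b}. If the 2×2 isospectral reduction R over S = {a,b} at λ satisfies R_{a,a} = R_{b,b} for all such λ (in a nonempty open set, or as rational functions), then p(M\a, λ) = p(M\b, λ) as polynomials, i.e. a and b are cospectral. -/
open Matrix

noncomputable def isoReduction {n : ℕ} (M : Matrix (Fin n) (Fin n) ℂ)
    (p : Fin n → Prop) [DecidablePred p] (lam : ℂ) :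
    Matrix {i // p i} {i // p i} ℂ :=
  M.toBlock p p -
    M.toBlock p (fun i => ¬ p i) *
      (M.toBlock (fun i => ¬ p i) (fun i => ¬ p i) - lam • 1)⁻¹ *
        M.toBlock (fun i => ¬ p i) p

noncomputable def Mdel {n : ℕ} (M : Matrix (Fin n) (Fin n) ℂ) (a : Fin n) :
    Matrix {i : Fin n // ¬ i = a} {i : Fin n // ¬ i = a} ℂ :=
  M.toBlock (fun i => ¬ i = a) (fun i => ¬ i = a)

/-- `M \ {a,b}`. -/
noncomputable def Mdel2 {n : ℕ} (M : Matrix (Fin n) (Fin n) ℂ) (a b : Fin n) :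
    Matrix {i : Fin n // ¬ (i = a ∨ i = b)} {i : Fin n // ¬ (i = a ∨ i = b)} ℂ :=
  M.toBlock (fun i => ¬ (i = a ∨ i = b)) (fun i => ¬ (i = a ∨ i = b))

/-!
Schur's determinant formula for `M\b - λ`, split into the index `a` and the block `M\{a,b}`,
gives `p(M\b, λ) = p(M\{a,b}, λ) · (R_aa(λ) - λ)`, and symmetrically
`p(M\a, λ) = p(M\{a,b}, λ) · (R_bb(λ) - λ)`. Hence the characteristic polynomials of `M\a` and
`M\b` agree outside the finitely many roots of `p(M\a) p(M\b) p(M\{a,b})`, so they are equal.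
-/

open Polynomial

theorem Polynomial.eq_of_eval_eq_of_eval_ne_zero {R : Type*} [CommRing R] [IsDomain R]
    [Infinite R] {p q r : R[X]} (hr : r ≠ 0) (h : ∀ x, r.eval x ≠ 0 → p.eval x = q.eval x) :
    p = q :=
  eq_of_infinite_eval_eq p q <| (finite_setOfPred_isRoot hr).infinite_compl.mono h

namespace Matrix

variable {K ι : Type*} [CommRing K] [DecidableEq ι]

theorem toBlock_sub_smul_one_self (A : Matrix ι ι K) (t : K) (p : ι → Prop) :
    (A - t • 1).toBlock p p = A.toBlock p p - t • 1 := by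
  rw [← toBlock_one_self p]
  rfl

theorem toBlock_sub_smul_one_of_disjoint (A : Matrix ι ι K) (t : K) {p q : ι → Prop}
    (hpq : Disjoint p q) : (A - t • 1).toBlock p q = A.toBlock p q := by
  rw [← sub_zero (A.toBlock p q), ← smul_zero t, ← toBlock_one_disjoint hpq]
  rfl

variable [Fintype ι]

theorem det_sub_smul_one (A : Matrix ι ι K) (t : K) :
    (A - t • 1).det = (-1) ^ Fintype.card ι * A.charpoly.eval t := by
  rw [eval_charpoly, scalar_apply, ← smul_one_eq_diagonal, ← det_neg, neg_sub]

theorem det_sub_smul_one_ne_zero_iff (A : Matrix ι ι K) (t : K) :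
    (A - t • 1).det ≠ 0 ↔ A.charpoly.eval t ≠ 0 := by
  rw [det_sub_smul_one, Ne, Ne, ((isUnit_neg_one (α := K)).pow _).mul_right_eq_zero]

noncomputable def schurComplement (A : Matrix ι ι K) (p : ι → Prop) [DecidablePred p] :
    Matrix {i // p i} {i // p i} K :=
  A.toBlock p p - A.toBlock p (fun i => ¬ p i) *
    (A.toBlock (fun i => ¬ p i) (fun i => ¬ p i))⁻¹ * A.toBlock (fun i => ¬ p i) p

theorem det_eq_det_toBlock_mul_det_schurComplement (A : Matrix ι ι K) (p : ι → Prop)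
    [DecidablePred p] (h : IsUnit (A.toBlock (fun i => ¬ p i) (fun i => ¬ p i)).det) :
    A.det = (A.toBlock (fun i => ¬ p i) (fun i => ¬ p i)).det * (schurComplement A p).det := by
  have := (A.toBlock (fun i => ¬ p i) (fun i => ¬ p i)).invertibleOfIsUnitDet h
  rw [det_toBlock A p, det_fromBlocks₂₂, invOf_eq_nonsing_inv, schurComplement]

theorem det_toBlock_ne_eq_det_mul_schurComplement_apply (A : Matrix ι ι K) {p : ι → Prop}
    [DecidablePred p] {c d : ι} (hcd : c ≠ d) (hp : ∀ i, p i ↔ i = c ∨ i = d)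
    (h : IsUnit (A.toBlock (fun i => ¬ p i) (fun i => ¬ p i)).det) :
    (A.toBlock (fun i => ¬ i = d) (fun i => ¬ i = d)).det =
      (A.toBlock (fun i => ¬ p i) (fun i => ¬ p i)).det *
        schurComplement A p ⟨c, (hp c).2 (Or.inl rfl)⟩ ⟨c, (hp c).2 (Or.inl rfl)⟩ := by
  set N := A.toBlock (fun i => ¬ i = d) (fun i => ¬ i = d)
  set q : {i // ¬ i = d} → Prop := fun j => j.1 = c
  let _ : Unique {j // q j} :=
    ⟨⟨⟨⟨c, hcd⟩, rfl⟩⟩, fun j => Subtype.ext (Subtype.ext j.2)⟩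
  let e : {j // ¬ q j} ≃ {i // ¬ p i} :=
    { toFun j := ⟨j.1.1, fun h => ((hp _).1 h).elim j.2 j.1.2⟩
      invFun i := ⟨⟨i.1, fun h => i.2 ((hp _).2 (Or.inr h))⟩, fun h => i.2 ((hp _).2 (Or.inl h))⟩
      left_inv _ := rfl
      right_inv _ := rfl }
  -- `e` and `f` do not move the underlying indices, so each block of `N` is a block of `A`
  -- up to reindexing, definitionally.
  let f : {j // q j} → {i // p i} := fun j => ⟨j.1.1, (hp _).2 (Or.inl j.2)⟩
  have hblock : N.toBlock (fun j => ¬ q j) (fun j => ¬ q j) =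
      (A.toBlock (fun i => ¬ p i) (fun i => ¬ p i)).submatrix e e := rfl
  have hschur : schurComplement N q = (schurComplement A p).submatrix f f := by
    have h₁₂ : N.toBlock q (fun j => ¬ q j) =
        (A.toBlock p (fun i => ¬ p i)).submatrix f e := rfl
    have h₂₁ : N.toBlock (fun j => ¬ q j) q =
        (A.toBlock (fun i => ¬ p i) p).submatrix e f := rfl
    rw [schurComplement, h₁₂, h₂₁, hblock, inv_submatrix_equiv, submatrix_mul_equiv,
      submatrix_mul_equiv]
    rfl
  rw [det_eq_det_toBlock_mul_det_schurComplement N q (by rwa [hblock, det_submatrix_equiv_self]),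
    hblock, det_submatrix_equiv_self, hschur, det_unique ((schurComplement A p).submatrix f f)]
  rfl

end Matrix

open Matrix

theorem schurComplement_sub_smul_one {n : ℕ} (M : Matrix (Fin n) (Fin n) ℂ) (p : Fin n → Prop)
    [DecidablePred p] (lam : ℂ) :
    schurComplement (M - lam • 1) p = isoReduction M p lam - lam • 1 := by
  have hdisj : Disjoint p (fun i => ¬ p i) := disjoint_compl_right
  rw [schurComplement, isoReduction, toBlock_sub_smul_one_self, toBlock_sub_smul_one_self,
    toBlock_sub_smul_one_of_disjoint _ _ hdisj, toBlock_sub_smul_one_of_disjoint _ _ hdisj.symm,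
    sub_right_comm]

theorem det_Mdel_sub_smul_one {n : ℕ} (M : Matrix (Fin n) (Fin n) ℂ) {p : Fin n → Prop}
    [DecidablePred p] {c d : Fin n} (hcd : c ≠ d) (hp : ∀ i, p i ↔ i = c ∨ i = d) (lam : ℂ)
    (h : (M.toBlock (fun i => ¬ p i) (fun i => ¬ p i) - lam • 1).det ≠ 0) :
    (Mdel M d - lam • 1).det = (M.toBlock (fun i => ¬ p i) (fun i => ¬ p i) - lam • 1).det *
      (isoReduction M p lam ⟨c, (hp c).2 (Or.inl rfl)⟩ ⟨c, (hp c).2 (Or.inl rfl)⟩ - lam) := by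
  have := det_toBlock_ne_eq_det_mul_schurComplement_apply (M - lam • 1) hcd hp
    (by rwa [toBlock_sub_smul_one_self, isUnit_iff_ne_zero])
  rwa [toBlock_sub_smul_one_self, toBlock_sub_smul_one_self, schurComplement_sub_smul_one,
    Matrix.sub_apply, Matrix.smul_apply, one_apply_eq, smul_eq_mul, mul_one] at this

/-- If the two diagonal entries of the `2 × 2` isospectral reduction over `{a,b}` agree
for every admissible `λ`, then `a` and `b` are cospectral. -/
theorem cospectral_of_isoReduction_diag_eq {n : ℕ} (M : Matrix (Fin n) (Fin n) ℂ)
    (a b : Fin n) (hab : a ≠ b)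
    (h : ∀ lam : ℂ, (Mdel M a - lam • 1).det ≠ 0 → (Mdel M b - lam • 1).det ≠ 0 →
      (Mdel2 M a b - lam • 1).det ≠ 0 →
      isoReduction M (fun i => i = a ∨ i = b) lam ⟨a, Or.inl rfl⟩ ⟨a, Or.inl rfl⟩
        = isoReduction M (fun i => i = a ∨ i = b) lam ⟨b, Or.inr rfl⟩ ⟨b, Or.inr rfl⟩) :
    (Mdel M a).charpoly = (Mdel M b).charpoly := by
  have hcard : Fintype.card {i // ¬ i = a} = Fintype.card {i // ¬ i = b} := by
    rw [Fintype.card_subtype_compl, Fintype.card_subtype_compl, Fintype.card_subtype_eq,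
      Fintype.card_subtype_eq]
  refine Polynomial.eq_of_eval_eq_of_eval_ne_zero
    (((Mdel M a).charpoly_monic.mul (Mdel M b).charpoly_monic).mul
      (Mdel2 M a b).charpoly_monic).ne_zero fun lam hlam => ?_
  simp only [eval_mul, mul_ne_zero_iff, ← det_sub_smul_one_ne_zero_iff] at hlam
  obtain ⟨⟨ha, hb⟩, hZ⟩ := hlam
  have hdet : (Mdel M a - lam • 1).det = (Mdel M b - lam • 1).det := by
    rw [det_Mdel_sub_smul_one M hab.symm (fun _ => or_comm) lam hZ,
      det_Mdel_sub_smul_one M hab (fun _ => Iff.rfl) lam hZ, h lam ha hb hZ]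
  rwa [det_sub_smul_one, det_sub_smul_one, hcard,
    mul_right_inj' (pow_ne_zero _ (neg_ne_zero.2 one_ne_zero))] at hdet
end

section
/- Let M be an n×n complex matrix with distinct indices a and b. If a and b are cospectral, i.e. char(M\a) = char(M\b), then for every λ not an eigenvalue of M\{a,b}, the 2×2 isospectral reduction R over S = {a,b} at λ satisfies R_{a,a} = R_{b,b}. -/
/-!
Fix `x ≠ y` and put `S = {x, y}`. Inside `M \ y - λ`, the Schur complement of the block
`M \ {x, y} - λ` is the `1 × 1` matrix `R_S(M)(λ)_{xx} - λ`, so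
`det (M \ y - λ) = det (M \ {x, y} - λ) * (R_S(M)(λ)_{xx} - λ)`.
Applied to `(x, y) = (a, b)` and `(b, a)`, cospectrality identifies the left-hand sides, and the
common factor `det (M \ {a, b} - λ)` is nonzero by assumption, so it cancels.
-/

open Matrix

theorem Matrix.det_eq_det_toBlock_compl_mul_schur {m K : Type*} [Fintype m] [DecidableEq m]
    [CommRing K] (A : Matrix m m K) (q : m → Prop) [DecidablePred q] (x : m)
    (hq : ∀ i, q i ↔ i = x) (hA : IsUnit (A.toBlock (fun i => ¬ q i) (fun i => ¬ q i)).det) :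
    A.det = (A.toBlock (fun i => ¬ q i) (fun i => ¬ q i)).det *
      (A x x - (A.toBlock q (fun i => ¬ q i) *
        (A.toBlock (fun i => ¬ q i) (fun i => ¬ q i))⁻¹ *
          A.toBlock (fun i => ¬ q i) q) ⟨x, (hq x).2 rfl⟩ ⟨x, (hq x).2 rfl⟩) := by
  let : Unique {i // q i} := ⟨⟨⟨x, (hq x).2 rfl⟩⟩, fun i => Subtype.ext ((hq i).1 i.2)⟩
  let := invertibleOfIsUnitDet _ hA
  rw [det_toBlock A q, det_fromBlocks₂₂, invOf_eq_nonsing_inv]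
  congr 1
  exact det_unique _

theorem Matrix.det_sub_smul_one_eq_neg_one_pow_mul_eval_charpoly {m K : Type*} [Fintype m]
    [DecidableEq m] [CommRing K] (A : Matrix m m K) (t : K) :
    (A - t • 1).det = (-1) ^ Fintype.card m * A.charpoly.eval t := by
  rw [eval_charpoly, ← det_neg, neg_sub, scalar_apply, smul_one_eq_diagonal]

theorem Matrix.det_sub_smul_one_eq_of_charpoly_eq {m m' K : Type*} [Fintype m] [DecidableEq m]
    [Fintype m'] [DecidableEq m'] [CommRing K] [Nontrivial K] {A : Matrix m m K} {B : Matrix m' m' K}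
    (h : A.charpoly = B.charpoly) (t : K) :
    (A - t • 1).det = (B - t • 1).det := by
  have hcard : Fintype.card m = Fintype.card m' := by
    rw [← charpoly_natDegree_eq_dim A, h, charpoly_natDegree_eq_dim]
  rw [det_sub_smul_one_eq_neg_one_pow_mul_eval_charpoly,
    det_sub_smul_one_eq_neg_one_pow_mul_eval_charpoly, h, hcard]

def Equiv.subtypeNeSubtypeNe {α : Type*} {p : α → Prop} {x y : α}
    (hp : ∀ i, p i ↔ i = x ∨ i = y) :
    {j : {i // ¬ i = y} // ¬ (j : α) = x} ≃ {i // ¬ p i} where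
  toFun j := ⟨j.1.1, fun h => ((hp _).1 h).elim j.2 j.1.2⟩
  invFun i := ⟨⟨i.1, fun h => i.2 ((hp _).2 (Or.inr h))⟩, fun h => i.2 ((hp _).2 (Or.inl h))⟩
  left_inv _ := rfl
  right_inv _ := rfl

theorem det_Mdel_sub_smul_one_eq_mul_isoReduction {n : ℕ} (M : Matrix (Fin n) (Fin n) ℂ)
    (p : Fin n → Prop) [DecidablePred p] {x y : Fin n} (hxy : ¬ x = y)
    (hp : ∀ i, p i ↔ i = x ∨ i = y) (lam : ℂ)
    (hlam : (M.toBlock (fun i => ¬ p i) (fun i => ¬ p i) - lam • 1).det ≠ 0) :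
    (Mdel M y - lam • 1).det =
      (M.toBlock (fun i => ¬ p i) (fun i => ¬ p i) - lam • 1).det *
        (isoReduction M p lam ⟨x, (hp x).2 (Or.inl rfl)⟩ ⟨x, (hp x).2 (Or.inl rfl)⟩ - lam) := by
  set A := Mdel M y - lam • 1
  let q : {i // ¬ i = y} → Prop := fun j => j.1 = x
  let e := Equiv.subtypeNeSubtypeNe hp
  let x' : {i // p i} := ⟨x, (hp x).2 (Or.inl rfl)⟩
  have hD : A.toBlock (fun j => ¬ q j) (fun j => ¬ q j) =
      (M.toBlock (fun i => ¬ p i) (fun i => ¬ p i) - lam • 1).submatrix e e := by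
    ext j k
    by_cases h : j.1.1 = k.1.1 <;>
      simp [A, e, Equiv.subtypeNeSubtypeNe, Mdel, toBlock_apply, one_apply, Subtype.ext_iff, h]
  have hB : A.toBlock q (fun j => ¬ q j) =
      (M.toBlock p (fun i => ¬ p i)).submatrix (fun _ => x') e := by
    ext j k
    have hj : j.1.1 = x := j.2
    have hk : ¬ k.1.1 = x := k.2
    simp [A, e, Equiv.subtypeNeSubtypeNe, Mdel, x', toBlock_apply, one_apply, Subtype.ext_iff,
      hj, Ne.symm hk]
  have hC : A.toBlock (fun j => ¬ q j) q =
      (M.toBlock (fun i => ¬ p i) p).submatrix e (fun _ => x') := by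
    ext j k
    have hj : ¬ j.1.1 = x := j.2
    have hk : k.1.1 = x := k.2
    simp [A, e, Equiv.subtypeNeSubtypeNe, Mdel, x', toBlock_apply, one_apply, Subtype.ext_iff,
      hj, hk]
  have hq : ∀ j, q j ↔ j = ⟨x, hxy⟩ := fun _ => (Subtype.ext_iff (a2 := ⟨x, hxy⟩)).symm
  have hunit : IsUnit (A.toBlock (fun j => ¬ q j) (fun j => ¬ q j)).det := by
    rw [hD, det_submatrix_equiv_self]
    exact isUnit_iff_ne_zero.2 hlam
  rw [det_eq_det_toBlock_compl_mul_schur A q ⟨x, hxy⟩ hq hunit, hD, hB, hC,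
    det_submatrix_equiv_self, inv_submatrix_equiv, submatrix_mul_equiv, submatrix_mul_equiv]
  congr 1
  simp only [A, x', isoReduction, Mdel, Matrix.sub_apply, toBlock_apply, Matrix.smul_apply,
    one_apply_eq, smul_eq_mul, mul_one, submatrix_apply]
  ring

/-- If `a` and `b` are cospectral then for every `λ` that is not an eigenvalue of
`M \ {a,b}`, the `2 × 2` isospectral reduction over `{a,b}` has equal diagonal entries. -/
theorem isoReduction_diag_eq_of_cospectral {n : ℕ} (M : Matrix (Fin n) (Fin n) ℂ)
    (a b : Fin n) (hab : a ≠ b)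
    (hcosp : (Mdel M a).charpoly = (Mdel M b).charpoly) :
    ∀ lam : ℂ, (Mdel2 M a b - lam • 1).det ≠ 0 →
      isoReduction M (fun i => i = a ∨ i = b) lam ⟨a, Or.inl rfl⟩ ⟨a, Or.inl rfl⟩
        = isoReduction M (fun i => i = a ∨ i = b) lam ⟨b, Or.inr rfl⟩ ⟨b, Or.inr rfl⟩ := by
  intro lam hlam
  have hdel_b :=
    det_Mdel_sub_smul_one_eq_mul_isoReduction M _ hab (fun _ => Iff.rfl) lam hlam
  have hdel_a :=
    det_Mdel_sub_smul_one_eq_mul_isoReduction M _ hab.symm (fun _ => or_comm) lam hlam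
  have h := det_sub_smul_one_eq_of_charpoly_eq hcosp lam
  rw [hdel_a, hdel_b] at h
  linear_combination mul_left_cancel₀ hlam h.symm
end
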